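/- arXiv:2010.08902 — 3 statements merged into one kernel-verified Lean document; each statement's English description precedes it below -/
import Mathlib

section
/- In the group B_2(C_2), all symbols vanish; that is, B_2(C_2) = 0. -/
open FreeAbelianGroup

/-- A multiset of characters generates the character group. -/
def Adm {A : Type} [AddCommGroup A] (s : Multiset A) : Prop :=
  AddSubgroup.closure {x | x ∈ s} = ⊤

/-- Admissible symbols: multisets of `n` characters generating `A`. -/
def Symb (A : Type) [AddCommGroup A] (n : ℕ) : Type :=
  {s : Multiset A // Multiset.card s = n ∧ Adm s}

/-- The blow-up relations (B₂). -/
def blowupRels (A : Type) [AddCommGroup A] (n : ℕ) :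
    Set (FreeAbelianGroup (Symb A n)) :=
  {x | ∃ (a b : A) (t : Multiset A)
      (h : Multiset.card (a ::ₘ b ::ₘ t) = n ∧ Adm (a ::ₘ b ::ₘ t))
      (h1 : Multiset.card (a ::ₘ (b - a) ::ₘ t) = n ∧ Adm (a ::ₘ (b - a) ::ₘ t))
      (h2 : Multiset.card ((a - b) ::ₘ b ::ₘ t) = n ∧ Adm ((a - b) ::ₘ b ::ₘ t)),
      a ≠ b ∧
      x = of (⟨a ::ₘ b ::ₘ t, h⟩ : Symb A n) - of ⟨a ::ₘ (b - a) ::ₘ t, h1⟩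
            - of ⟨(a - b) ::ₘ b ::ₘ t, h2⟩} ∪
  {x | ∃ (a : A) (t : Multiset A)
      (h : Multiset.card (a ::ₘ a ::ₘ t) = n ∧ Adm (a ::ₘ a ::ₘ t))
      (h0 : Multiset.card ((0 : A) ::ₘ a ::ₘ t) = n ∧ Adm ((0 : A) ::ₘ a ::ₘ t)),
      x = of (⟨a ::ₘ a ::ₘ t, h⟩ : Symb A n) - of ⟨(0 : A) ::ₘ a ::ₘ t, h0⟩}

/-- The group of equivariant birational types `𝓑ₙ(G)`, for `A = G^∨`. -/
def B (A : Type) [AddCommGroup A] (n : ℕ) : Type :=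
  FreeAbelianGroup (Symb A n) ⧸ AddSubgroup.closure (blowupRels A n)

instance (A : Type) [AddCommGroup A] (n : ℕ) : AddCommGroup (B A n) := by
  unfold B; infer_instance

/-- The class of a symbol in `𝓑ₙ(G)`. -/
def symb {A : Type} [AddCommGroup A] {n : ℕ} (s : Multiset A)
    (h : Multiset.card s = n ∧ Adm s) : B A n :=
  QuotientAddGroup.mk (of (⟨s, h⟩ : Symb A n))

lemma adm_of_unit {N : ℕ} [NeZero N] {s : Multiset (ZMod N)} {u : ZMod N}
    (hu : u ∈ s) (h : IsUnit u) : Adm s := by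
  rw [Adm, AddSubgroup.eq_top_iff']
  intro x
  have hu' : u ∈ AddSubgroup.closure {y | y ∈ s} := AddSubgroup.subset_closure hu
  obtain ⟨v, hv⟩ := h.exists_left_inv
  have hx : x = (x * v).val • u := by
    rw [nsmul_eq_mul, ZMod.natCast_val, ZMod.cast_id, mul_assoc, hv, mul_one]
  rw [hx]
  exact AddSubgroup.nsmul_mem _ hu' _

lemma admU {N : ℕ} [NeZero N] {s : Multiset (ZMod N)} {u v : ZMod N}
    (hu : u ∈ s) (huv : u * v = 1) : Adm s :=
  adm_of_unit hu (isUnit_iff_exists_inv.mpr ⟨v, huv⟩)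

/-! In `B₂(C₂)` the only admissible symbols are `[0,1]` and `[1,1]`. Blowing up `[0,1]` gives
`[0,1] = [0,1] + [1,1]`, so `[1,1] = 0`, and the diagonal relation `[1,1] = [0,1]` then kills
`[0,1]` as well. -/

section BlowupRelations

variable {A : Type} [AddCommGroup A] {n : ℕ}

theorem Adm.exists_ne_zero [Nontrivial A] {s : Multiset A} (hs : Adm s) : ∃ a ∈ s, a ≠ 0 := by
  by_contra! h0
  have hbot : AddSubgroup.closure {x | x ∈ s} = ⊥ := AddSubgroup.closure_eq_bot_iff.2 h0
  exact bot_ne_top (hbot.symm.trans hs)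

theorem eq_zero_of_forall_symb_eq_zero (hsymb : ∀ s h, symb s h = (0 : B A n)) (x : B A n) :
    x = 0 := by
  have hmk : QuotientAddGroup.mk' (AddSubgroup.closure (blowupRels A n)) = 0 :=
    FreeAbelianGroup.lift_ext _ _ fun s => hsymb s.1 s.2
  obtain ⟨y, rfl⟩ := QuotientAddGroup.mk'_surjective _ x
  exact DFunLike.congr_fun hmk y

theorem symb_blowup {a b : A} {t : Multiset A} (hab : a ≠ b)
    (h : Multiset.card (a ::ₘ b ::ₘ t) = n ∧ Adm (a ::ₘ b ::ₘ t))
    (h1 : Multiset.card (a ::ₘ (b - a) ::ₘ t) = n ∧ Adm (a ::ₘ (b - a) ::ₘ t))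
    (h2 : Multiset.card ((a - b) ::ₘ b ::ₘ t) = n ∧ Adm ((a - b) ::ₘ b ::ₘ t)) :
    symb (a ::ₘ b ::ₘ t) h =
      symb (a ::ₘ (b - a) ::ₘ t) h1 + symb ((a - b) ::ₘ b ::ₘ t) h2 := by
  have hrel : symb (a ::ₘ b ::ₘ t) h - symb (a ::ₘ (b - a) ::ₘ t) h1
      - symb ((a - b) ::ₘ b ::ₘ t) h2 = 0 :=
    (QuotientAddGroup.eq_zero_iff _).2
      (AddSubgroup.subset_closure (Or.inl ⟨a, b, t, h, h1, h2, hab, rfl⟩))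
  rwa [sub_sub, sub_eq_zero] at hrel

theorem symb_diag {a : A} {t : Multiset A}
    (h : Multiset.card (a ::ₘ a ::ₘ t) = n ∧ Adm (a ::ₘ a ::ₘ t))
    (h0 : Multiset.card ((0 : A) ::ₘ a ::ₘ t) = n ∧ Adm ((0 : A) ::ₘ a ::ₘ t)) :
    symb (a ::ₘ a ::ₘ t) h = symb ((0 : A) ::ₘ a ::ₘ t) h0 :=
  sub_eq_zero.1 <| (QuotientAddGroup.eq_zero_iff _).2
    (AddSubgroup.subset_closure (Or.inr ⟨a, t, h, h0, rfl⟩))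

/-- Blowing up `[0, a, …]` reproduces `[0, a, …]` plus `[-a, a, …]`. -/
theorem symb_neg_self_eq_zero {a : A} (ha : a ≠ 0) {t : Multiset A}
    (h0 : Multiset.card ((0 : A) ::ₘ a ::ₘ t) = n ∧ Adm ((0 : A) ::ₘ a ::ₘ t))
    (h : Multiset.card ((-a) ::ₘ a ::ₘ t) = n ∧ Adm ((-a) ::ₘ a ::ₘ t)) :
    symb ((-a) ::ₘ a ::ₘ t) h = 0 := by
  have hblow := symb_blowup ha.symm h0 (by rwa [sub_zero]) (by rwa [zero_sub])
  simp only [sub_zero, zero_sub] at hblow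
  exact left_eq_add.1 hblow

end BlowupRelations

theorem eq_zero_one_or_eq_one_one_of_adm {s : Multiset (ZMod 2)}
    (hs : Multiset.card s = 2 ∧ Adm s) :
    s = {0, 1} ∨ s = {1, 1} := by
  obtain ⟨a, b, rfl⟩ := Multiset.card_eq_two.1 hs.1
  obtain ⟨c, hc, hc0⟩ := hs.2.exists_ne_zero
  rw [Multiset.insert_eq_cons, Multiset.mem_cons, Multiset.mem_singleton] at hc
  clear hs
  revert a b c
  decide

-- `{1, 1}` is `{-1, 1}` in `ZMod 2` up to definitional unfolding.
theorem symb_one_one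
    (h : Multiset.card ({1, 1} : Multiset (ZMod 2)) = 2 ∧ Adm {(1 : ZMod 2), 1}) :
    symb {(1 : ZMod 2), 1} h = 0 :=
  symb_neg_self_eq_zero one_ne_zero (t := 0) ⟨rfl, admU (u := 1) (v := 1) (by simp) rfl⟩ h

theorem symb_zero_one
    (h : Multiset.card ({0, 1} : Multiset (ZMod 2)) = 2 ∧ Adm {(0 : ZMod 2), 1}) :
    symb {(0 : ZMod 2), 1} h = 0 :=
  (symb_diag ⟨rfl, admU (u := 1) (v := 1) (by simp) rfl⟩ h).symm.trans (symb_one_one _)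

/-- `B₂(C₂) = 0`: all symbols (indeed all elements) vanish. -/
theorem B2_C2_trivial : ∀ x : B (ZMod 2) 2, x = 0 := by
  refine eq_zero_of_forall_symb_eq_zero fun s hs => ?_
  rcases eq_zero_one_or_eq_one_one_of_adm hs with rfl | rfl
  · exact symb_zero_one hs
  · exact symb_one_one hs
end

section
/- In Burn_2^{nontriv}(C_4), the subgroup generated by classes of points and rational curves is isomorphic to Z^2, freely generated by [1,2] := (C_4, k, (1,2)) and [2,3] := (C_4, k, (2,3)); moreover [1,3] = 0, [0,3] = [3,3] = -[1,2]+[2,3], [0,1] = [1,1] = [1,2]-[2,3], (C_2, C_2 ⟲ k(t), 1) = -[1,2]-[2,3], and the classes (C_2, C_2 ⟲ k²(t), 1) and (C_2, C_2 ⟲ k², (1,1)) vanish. -/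
open FreeAbelianGroup

/-- Generators of the points-and-rational-curves part of `Burn₂ⁿᵒⁿᵗʳⁱᵛ(C₄)`:
the point classes `[i,j] = (C₄, k, (i,j))`, the curve classes
`[1,0] = (C₄, k(t), 1)` and `[3,0] = (C₄, k(t), 3)`, and the classes
`a = (C₂, C₂ ⟲ k(t), 1)`, `b = (C₂, C₂ ⟲ k², (1,1))`, `c = (C₂, C₂ ⟲ k²(t), 1)`. -/
inductive Gen13
  | s11 | s12 | s13 | s23 | s33 | s10 | s30 | a | b | c
  deriving DecidableEq

open Gen13

/-- The blow-up relations of the presentation, written as elements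
`lhs - rhs` of the free abelian group:
`[0,1]=[0,1]+[1,3]`, `[0,3]=[0,3]+[1,3]`, `[1,1]=[1,0]`, `[1,2]=[1,1]+[2,3]`,
`[1,3]=[1,2]+[2,3]+a`, `[2,3]=[1,2]+[3,3]`, `[3,3]=[3,0]`, `b=c`, `a=a+c`,
`c=c+c`. -/
def rels13 : Set (FreeAbelianGroup Gen13) :=
  { of s13,
    of s11 - of s10,
    of s12 - of s11 - of s23,
    of s13 - of s12 - of s23 - of a,
    of s23 - of s12 - of s33,
    of s33 - of s30,
    of b - of c,
    of c }

/-- The points-and-rational-curves subgroup of `Burn₂ⁿᵒⁿᵗʳⁱᵛ(C₄)`. -/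
def Burn13 : Type := FreeAbelianGroup Gen13 ⧸ AddSubgroup.closure rels13

instance : AddCommGroup Burn13 := by unfold Burn13; infer_instance

/-- The class of a generator. -/
def cls (g : Gen13) : Burn13 := QuotientAddGroup.mk (of g)

/-! The relations can be solved: `[1,3]` and `c`, hence `b`, vanish, and every other generator
is an integer combination of `[1,2]` and `[2,3]`. Giving each generator the coordinates of that
combination respects all relations, so it defines a homomorphism `Burn13 →+ ℤ × ℤ`, inverse to
`(m, n) ↦ m • [1,2] + n • [2,3]`. -/

namespace Burn13

/-- The quotient map, typed into `Burn13` so that its lemmas produce the operations of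
`Burn13`'s own instance, which is not reducibly that of the quotient. -/
def mk : FreeAbelianGroup Gen13 →+ Burn13 := QuotientAddGroup.mk' _

lemma mk_of (g : Gen13) : mk (of g) = cls g := rfl

lemma mk_surjective : Function.Surjective mk := QuotientAddGroup.mk'_surjective _

lemma mk_eq_zero_of_mem_rels13 {r : FreeAbelianGroup Gen13} (hr : r ∈ rels13) : mk r = 0 :=
  (QuotientAddGroup.eq_zero_iff r).2 (AddSubgroup.subset_closure hr)

lemma hom_ext {M : Type*} [AddCommGroup M] {f f' : Burn13 →+ M}
    (h : ∀ g, f (cls g) = f' (cls g)) : f = f' := by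
  ext x
  obtain ⟨y, rfl⟩ := mk_surjective x
  exact DFunLike.congr_fun (lift_ext (f.comp mk) (f'.comp mk) h) y

lemma cls_s13 : cls s13 = 0 := mk_eq_zero_of_mem_rels13 (by simp [rels13])

lemma cls_c : cls c = 0 := mk_eq_zero_of_mem_rels13 (by simp [rels13])

lemma cls_b : cls b = 0 := by
  have h := mk_eq_zero_of_mem_rels13 (r := of b - of c) (by simp [rels13])
  rwa [map_sub, mk_of, mk_of, cls_c, sub_zero] at h

lemma cls_s10 : cls s10 = cls s11 := by
  have h := mk_eq_zero_of_mem_rels13 (r := of s11 - of s10) (by simp [rels13])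
  rw [map_sub, mk_of, mk_of, sub_eq_zero] at h
  exact h.symm

lemma cls_s11 : cls s11 = cls s12 - cls s23 := by
  have h := mk_eq_zero_of_mem_rels13 (r := of s12 - of s11 - of s23) (by simp [rels13])
  simp only [map_sub, mk_of] at h
  linear_combination (norm := abel) -h

lemma cls_a : cls a = -cls s12 - cls s23 := by
  have h := mk_eq_zero_of_mem_rels13 (r := of s13 - of s12 - of s23 - of a) (by simp [rels13])
  simp only [map_sub, mk_of, cls_s13] at h
  linear_combination (norm := abel) -h

lemma cls_s33 : cls s33 = -cls s12 + cls s23 := by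
  have h := mk_eq_zero_of_mem_rels13 (r := of s23 - of s12 - of s33) (by simp [rels13])
  simp only [map_sub, mk_of] at h
  linear_combination (norm := abel) -h

lemma cls_s30 : cls s30 = cls s33 := by
  have h := mk_eq_zero_of_mem_rels13 (r := of s33 - of s30) (by simp [rels13])
  rw [map_sub, mk_of, mk_of, sub_eq_zero] at h
  exact h.symm

def coord : Gen13 → ℤ × ℤ
  | s11 => (1, -1)
  | s12 => (1, 0)
  | s13 => (0, 0)
  | s23 => (0, 1)
  | s33 => (-1, 1)
  | s10 => (1, -1)
  | s30 => (-1, 1)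
  | a => (-1, -1)
  | b => (0, 0)
  | c => (0, 0)

lemma closure_rels13_le_ker : AddSubgroup.closure rels13 ≤ (lift coord).ker := by
  rw [AddSubgroup.closure_le]
  rintro r (rfl | rfl | rfl | rfl | rfl | rfl | rfl | rfl) <;> simp [coord]

def toProd : Burn13 →+ ℤ × ℤ :=
  QuotientAddGroup.lift _ (lift coord) fun _ hr => closure_rels13_le_ker hr

lemma toProd_cls (g : Gen13) : toProd (cls g) = coord g := lift_apply_of coord g

def ofProd : ℤ × ℤ →+ Burn13 :=
  (zmultiplesHom Burn13 (cls s12)).coprod (zmultiplesHom Burn13 (cls s23))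

lemma ofProd_apply (m n : ℤ) : ofProd (m, n) = m • cls s12 + n • cls s23 := rfl

lemma ofProd_comp_toProd : ofProd.comp toProd = AddMonoidHom.id Burn13 :=
  hom_ext fun g => by
    cases g <;>
      simp only [AddMonoidHom.comp_apply, AddMonoidHom.id_apply, toProd_cls, coord,
        ofProd_apply, one_smul, zero_smul, cls_s13, cls_c, cls_b, cls_s10, cls_s11,
        cls_a, cls_s33, cls_s30] <;>
      abel

lemma toProd_comp_ofProd : toProd.comp ofProd = AddMonoidHom.id (ℤ × ℤ) :=
  AddMonoidHom.ext fun ⟨m, n⟩ => by simp [ofProd_apply, toProd_cls, coord]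

def equivProd : Burn13 ≃+ ℤ × ℤ :=
  toProd.toAddEquiv ofProd ofProd_comp_toProd toProd_comp_ofProd

end Burn13

/-- this group is `≅ ℤ²`, freely generated by `[1,2]` and `[2,3]`,
with `[1,3] = 0`, `[0,3] = [3,3] = -[1,2]+[2,3]`, `[0,1] = [1,1] = [1,2]-[2,3]`,
`(C₂,C₂⟲k(t),1) = -[1,2]-[2,3]`, and `(C₂,C₂⟲k²(t),1) = (C₂,C₂⟲k²,(1,1)) = 0`. -/
theorem Burn2_C4_points_and_curves :
    (∃ φ : Burn13 ≃+ ℤ × ℤ, φ (cls s12) = (1, 0) ∧ φ (cls s23) = (0, 1)) ∧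
    cls s13 = 0 ∧
    cls s30 = cls s33 ∧ cls s33 = -cls s12 + cls s23 ∧
    cls s10 = cls s11 ∧ cls s11 = cls s12 - cls s23 ∧
    cls a = -cls s12 - cls s23 ∧
    cls c = 0 ∧ cls b = 0 := by
  exact ⟨⟨Burn13.equivProd, Burn13.toProd_cls s12, Burn13.toProd_cls s23⟩,
    Burn13.cls_s13, Burn13.cls_s30, Burn13.cls_s33, Burn13.cls_s10, Burn13.cls_s11,
    Burn13.cls_a, Burn13.cls_c, Burn13.cls_b⟩
end

section
/- In Burn_2(D_6) for the dihedral group D_6 of order 12, the symbol s := (C_2, S_3 ⟲ k(P^1), (1)) — the class of a rational curve with stabilizer the central C_2 and nontrivial residual S_3-action — is independent of all other generators: no nontrivial multiple of s is expressible as a Z-linear combination of the other generators modulo the listed relations. Consequently, the two D_6-actions (on P^2, contributing 2s, and on the quadric model of the sextic del Pezzo surface, contributing 1·s) have distinct classes in Burn_2(D_6). -/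
/-! No relation of `Burn₂(D₆)` involves `s`, so the multiplicity of `s` descends from the free
abelian group to a homomorphism `Burn₂(D₆) →+ ℤ`. It is `1` on `s` and kills every other
generator, hence it takes the value `m` on `m • s` but `0` on the span of the other generators,
and `2` on `2 • s + x` but `1` on `s + y`. -/

open FreeAbelianGroup

/-- Generators of (the relevant part of) `Burn₂(D₆)` for the dihedral group
`D₆` of order 12, following §7.5 of the paper.  The distinguished generator
`s = (C₂, 𝔖₃ ⟲ k(ℙ¹), (1))` is the class of a rational curve with stabilizer
the central `C₂` and nontrivial residual `𝔖₃`-action. -/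
inductive Gen19
  | c6K                  -- (C₆, ⟨σ̄⟩ ⟲ K, (1))
  | c6k2 (j : Fin 4)     -- (C₆, ⟨σ̄⟩ ⟲ k², (1, j+1))
  | c6k2_23              -- (C₆, ⟨σ̄⟩ ⟲ k², (2,3))
  | c6k2t                -- (C₆, ⟨σ̄⟩ ⟲ k²(t), (1))
  | c2k2t3               -- (C₂, ⟨ρ̄,σ̄⟩ ⟲ k²(t), (1)), ρ̄ acting by cube roots of 1
  | c3k2t                -- (C₃, ⟨ρ̄,σ̄⟩ ⟲ k²(t), (1)), ρ̄ acting by -1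
  | d2_12 | d2_13 | d2_23  -- (D₂, triv ⟲ k, (a₁,a₂))
  | c2k3t                -- (C₂, ⟨ρ̄,σ̄⟩ ⟲ k³(t), (1))
  | sKt                  -- (S, C₂ ⟲ k(t), (1))
  | spKt                 -- (S', C₂ ⟲ k(t), (1))
  | c3K                  -- (C₃, ⟨ρ̄,σ̄⟩ ⟲ K, (1))
  | c3k4                 -- (C₃, ⟨ρ̄,σ̄⟩ ⟲ k⁴, (1,1))
  | c3k4t                -- (C₃, ⟨ρ̄,σ̄⟩ ⟲ k⁴(t), (1))
  | s                    -- (C₂, ⟨ρ̄,σ̄⟩ ⟲ k(ℙ¹), (1)) : the distinguished symbol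
  | c2k6t                -- (C₂, ⟨ρ̄,σ̄⟩ ⟲ k⁶(t), (1))
  | sK                   -- (S, C₂ ⟲ K, (1))
  | spK                  -- (S', C₂ ⟲ K, (1))
  | sk2t                 -- (S, C₂ ⟲ k²(t), (1))
  | spk2t                -- (S', C₂ ⟲ k²(t), (1))
  | trivX                -- (triv, D₆ ⟲ k(X), triv)
  deriving DecidableEq

open Gen19

/-- The blow-up relations of `Burn₂(D₆)` listed in §7.5, written as elements
`lhs - rhs` of the free abelian group on the generators. -/
def rels19 : Set (FreeAbelianGroup Gen19) :=
  { of (c6k2 0) - of c6k2t,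
    of (c6k2 1) - of (c6k2 0) - of (c6k2 3),
    of (c6k2 2) - of (c6k2 1) - of c6k2_23 - of c2k2t3,
    of (c6k2 3) - of (c6k2 2) - of c6k2_23 - of c3k2t,
    2 • of (c6k2 3) + of c2k2t3,
    of c6k2_23 - of (c6k2 1) - of (c6k2 2),
    of d2_12 - of d2_13 - of d2_23 - of spKt,
    of d2_13 - of d2_12 - of d2_23 - of c2k3t,
    of d2_23 - of d2_12 - of d2_13 - of sKt,
    of c3k4 - of c3k4t,
    2 • of c3k4,
    of c2k6t,
    of sk2t,
    of spk2t }

/-- (The relevant part of) `Burn₂(D₆)`. -/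
def Burn19 : Type := FreeAbelianGroup Gen19 ⧸ AddSubgroup.closure rels19

instance : AddCommGroup Burn19 := by unfold Burn19; infer_instance

def cls19 (g : Gen19) : Burn19 := QuotientAddGroup.mk (of g)

namespace FreeAbelianGroup

variable {X : Type*}

theorem coeff_of_self (a : X) : coeff a (of a) = 1 := by
  simp [coeff]

theorem coeff_of_of_ne {a g : X} (h : g ≠ a) : coeff a (of g) = 0 := by
  simp [coeff, Finsupp.single_eq_of_ne h.symm]

variable {R : Set (FreeAbelianGroup X)} (a : X)

noncomputable def quotientCoeff (hR : R ⊆ (coeff a).ker) :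
    FreeAbelianGroup X ⧸ AddSubgroup.closure R →+ ℤ :=
  QuotientAddGroup.lift _ (coeff a) ((AddSubgroup.closure_le _).2 hR)

variable (hR : R ⊆ (coeff a).ker)

theorem quotientCoeff_mk_of_self : quotientCoeff a hR (of a) = 1 :=
  coeff_of_self a

theorem closure_mk_of_ne_le_ker_quotientCoeff :
    AddSubgroup.closure ((fun g ↦ (of g : FreeAbelianGroup X ⧸ AddSubgroup.closure R)) ''
      {g | g ≠ a}) ≤ (quotientCoeff a hR).ker := by
  rw [AddSubgroup.closure_le]
  rintro _ ⟨g, hg, rfl⟩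
  exact coeff_of_of_ne hg

end FreeAbelianGroup

theorem rels19_subset_ker_coeff_s : rels19 ⊆ (coeff s).ker := by
  simp [Set.insert_subset_iff, rels19, coeff_of_of_ne]

/-- in `Burn₂(D₆)` the symbol `s = (C₂, 𝔖₃ ⟲ k(ℙ¹), (1))` is
independent of all other generators: no nonzero multiple of `s` lies in the
subgroup generated by the other generators.  Consequently the classes of the
two `D₆`-actions of Iskovskikh — contributing `2s + (other symbols)` on `ℙ²`
and `1·s + (other symbols)` on the quadric model — are distinct. -/
theorem s_independent_in_Burn2_D6 :
    (∀ m : ℤ, m ≠ 0 →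
      m • cls19 s ∉ AddSubgroup.closure (cls19 '' {g : Gen19 | g ≠ s})) ∧
    (∀ x y : Burn19, x ∈ AddSubgroup.closure (cls19 '' {g : Gen19 | g ≠ s}) →
      y ∈ AddSubgroup.closure (cls19 '' {g : Gen19 | g ≠ s}) →
      2 • cls19 s + x ≠ cls19 s + y) := by
  let φ : Burn19 →+ ℤ := quotientCoeff s rels19_subset_ker_coeff_s
  have hs : φ (cls19 s) = 1 := quotientCoeff_mk_of_self s rels19_subset_ker_coeff_s
  have hother : ∀ x ∈ AddSubgroup.closure (cls19 '' {g : Gen19 | g ≠ s}), φ x = 0 :=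
    fun x hx ↦ closure_mk_of_ne_le_ker_quotientCoeff s rels19_subset_ker_coeff_s hx
  refine ⟨fun m hm hmem ↦ hm ?_, fun x y hx hy h ↦ ?_⟩
  · simpa [hs] using hother _ hmem
  · simpa [hs, hother x hx, hother y hy] using congrArg φ h
end
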